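/- Let ρ = diag(ρ_11,…,ρ_nn) with all ρ_{ll} > 0. For each Bohr frequency ω = ε_m − ε_n (m > n) define Π̂_ω(X) := (Γ_{+,ω}(ρ_{nn}/ρ_{mm}) − Γ_{-,ω}) E_ω† X E_ω + (Γ_{-,ω}(ρ_{mm}/ρ_{nn}) − Γ_{+,ω}) E_ω X E_ω†. Then for all n×n matrices X, Y: Σ_ω tr(ρ Π̂_ω(X) Y) = Σ_{m,n} X_{nn} Y_{mm} ( Γ_{+,ε_m−ε_n} ρ_{nn} − Γ_{-,ε_m−ε_n} ρ_{mm} + Γ_{-,ε_n−ε_m} ρ_{nn} − Γ_{+,ε_n−ε_m} ρ_{mm} ). -/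

import Mathlib

open Matrix Finset

/-- `E_ω = |ε_n⟩⟨ε_m|` for the pair `p = (n, m)` with `n < m`:
the matrix whose only nonzero entry is a `1` in position `(n, m)`. -/
noncomputable def Eof {N : ℕ} (p : Fin N × Fin N) : Matrix (Fin N) (Fin N) ℂ :=
  Matrix.single p.1 p.2 1

/-- `Π̂_ω(X) = (Γ₊(ω)(ρ_nn/ρ_mm) − Γ₋(ω)) E_ω† X E_ω + (Γ₋(ω)(ρ_mm/ρ_nn) − Γ₊(ω)) E_ω X E_ω†`
for the Bohr frequency `ω = ε_m − ε_n` of the pair `p = (n, m)`, `n < m`. -/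
noncomputable def PiHat {N : ℕ} (ε : Fin N → ℝ) (Γm Γp : ℝ → ℝ) (r : Fin N → ℝ)
    (p : Fin N × Fin N) (X : Matrix (Fin N) (Fin N) ℂ) : Matrix (Fin N) (Fin N) ℂ :=
  ((Γp (ε p.2 - ε p.1) * (r p.1 / r p.2) - Γm (ε p.2 - ε p.1) : ℝ) : ℂ) •
      ((Eof p)ᴴ * X * Eof p) +
    ((Γm (ε p.2 - ε p.1) * (r p.2 / r p.1) - Γp (ε p.2 - ε p.1) : ℝ) : ℂ) •
      (Eof p * X * (Eof p)ᴴ)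

/-!
Conjugation by the matrix unit `E_ω = |n⟩⟨m|` sends `X` to a multiple of a diagonal matrix unit, so
`tr(ρ E_ω† X E_ω Y) = ρ_mm X_nn Y_mm` and `tr(ρ E_ω X E_ω† Y) = ρ_nn X_mm Y_nn`; the factor `ρ_mm`
resp. `ρ_nn` cancels the denominator of the ratio in front. On the right-hand side the diagonal
terms cancel, the pairs `n > m` fold onto `n < m` by swapping, and the rates at the negative
frequency `ε_n − ε_m` vanish, which leaves exactly the two halves of `Π̂_ω`.
-/

theorem trace_diagonal_mul_single_mul_mul_single_mul {ι R : Type*} [Fintype ι] [DecidableEq ι]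
    [CommSemiring R] (d : ι → R) (i j : ι) (X Y : Matrix ι ι R) :
    trace (diagonal d * (single i j 1 * X * single j i 1) * Y) = d i * X j j * Y i i := by
  rw [single_mul_mul_single, one_mul, mul_one, Matrix.mul_assoc, trace_mul_comm,
    Matrix.mul_assoc, trace_single_mul, smul_eq_mul, mul_diagonal]
  ring

theorem Finset.sum_prod_eq_sum_lt_add_swap {ι M : Type*} [Fintype ι] [LinearOrder ι]
    [AddCommMonoid M] (f : ι × ι → M) (hdiag : ∀ i, f (i, i) = 0) :
    ∑ p, f p = ∑ p with p.1 < p.2, (f p + f p.swap) := by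
  rw [sum_add_distrib, ← sum_filter_add_sum_filter_not univ (fun p : ι × ι => p.1 < p.2)]
  congr 1
  calc ∑ p with ¬p.1 < p.2, f p = ∑ p with p.2 < p.1, f p := by
        refine (sum_subset (fun p => by simpa using le_of_lt) fun p hle hlt => ?_).symm
        simp only [mem_filter, mem_univ, true_and, not_lt] at hle hlt
        rw [← Prod.mk.eta (p := p), le_antisymm hle hlt, hdiag]
    _ = ∑ p with p.1 < p.2, f p.swap :=
        sum_nbij' Prod.swap Prod.swap (by simp) (by simp) (by simp) (by simp) (by simp)

theorem trace_diagonal_mul_PiHat_mul {N : ℕ} (ε : Fin N → ℝ) (Γm Γp : ℝ → ℝ) (r : Fin N → ℝ)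
    {n m : Fin N} (hn : r n ≠ 0) (hm : r m ≠ 0) (X Y : Matrix (Fin N) (Fin N) ℂ) :
    trace (diagonal (fun l => ((r l : ℝ) : ℂ)) * PiHat ε Γm Γp r (n, m) X * Y) =
      X n n * Y m m * ((Γp (ε m - ε n) * r n - Γm (ε m - ε n) * r m : ℝ) : ℂ) +
        X m m * Y n n * ((Γm (ε m - ε n) * r m - Γp (ε m - ε n) * r n : ℝ) : ℂ) := by
  simp only [PiHat, Eof, conjTranspose_single, star_one, Matrix.mul_add, Matrix.add_mul,
    Matrix.mul_smul, Matrix.smul_mul, trace_add, trace_smul, smul_eq_mul,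
    trace_diagonal_mul_single_mul_mul_single_mul]
  have hn' : (r n : ℂ) ≠ 0 := by exact_mod_cast hn
  have hm' : (r m : ℂ) ≠ 0 := by exact_mod_cast hm
  push_cast
  field_simp

theorem trace_PiHat_eq_general {N : ℕ} (ε : Fin N → ℝ) (hε : StrictMono ε)
    (Γm Γp : ℝ → ℝ)
    (hΓm0 : ∀ ω ≤ (0 : ℝ), Γm ω = 0) (hΓp0 : ∀ ω ≤ (0 : ℝ), Γp ω = 0)
    (r : Fin N → ℝ) (hr : ∀ l, 0 < r l) (X Y : Matrix (Fin N) (Fin N) ℂ) :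
    ∑ p ∈ Finset.univ.filter (fun p : Fin N × Fin N => p.1 < p.2),
        Matrix.trace ((Matrix.diagonal fun l => ((r l : ℝ) : ℂ)) * PiHat ε Γm Γp r p X * Y) =
      ∑ m : Fin N, ∑ k : Fin N, X k k * Y m m *
        ((Γp (ε m - ε k) * r k - Γm (ε m - ε k) * r m +
            Γm (ε k - ε m) * r k - Γp (ε k - ε m) * r m : ℝ) : ℂ) := by
  rw [sum_comm, ← Fintype.sum_prod_type', sum_prod_eq_sum_lt_add_swap _ fun i => by simp]
  refine sum_congr rfl fun ⟨n, m⟩ hnm => ?_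
  have hneg : ε n - ε m ≤ 0 := sub_nonpos.mpr (hε (mem_filter.mp hnm).2).le
  rw [trace_diagonal_mul_PiHat_mul ε Γm Γp r (hr n).ne' (hr m).ne']
  simp only [Prod.swap, hΓm0 _ hneg, hΓp0 _ hneg]
  push_cast
  ring

/-- For `ρ = diag(ρ₁₁,…)` with all `ρ_ll > 0`:
`Σ_ω tr(ρ Π̂_ω(X) Y) = Σ_{m,n} X_{nn} Y_{mm} ( Γ₊(ε_m−ε_n) ρ_nn − Γ₋(ε_m−ε_n) ρ_mm
  + Γ₋(ε_n−ε_m) ρ_nn − Γ₊(ε_n−ε_m) ρ_mm )`. -/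
theorem trace_PiHat_eq {N : ℕ} (ε : Fin N → ℝ) (hε : StrictMono ε)
    (Γm Γp : ℝ → ℝ) (hΓm : ∀ ω, 0 ≤ Γm ω) (hΓp : ∀ ω, 0 ≤ Γp ω)
    (hΓm0 : ∀ ω ≤ (0 : ℝ), Γm ω = 0) (hΓp0 : ∀ ω ≤ (0 : ℝ), Γp ω = 0)
    (r : Fin N → ℝ) (hr : ∀ l, 0 < r l) (X Y : Matrix (Fin N) (Fin N) ℂ) :
    ∑ p ∈ Finset.univ.filter (fun p : Fin N × Fin N => p.1 < p.2),
        Matrix.trace ((Matrix.diagonal fun l => ((r l : ℝ) : ℂ)) * PiHat ε Γm Γp r p X * Y) =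
      ∑ m : Fin N, ∑ k : Fin N, X k k * Y m m *
        ((Γp (ε m - ε k) * r k - Γm (ε m - ε k) * r m +
            Γm (ε k - ε m) * r k - Γp (ε k - ε m) * r m : ℝ) : ℂ) :=
  trace_PiHat_eq_general ε hε Γm Γp hΓm0 hΓp0 r hr X Y
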